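/- Let d ≥ 1, Λ ≥ 1, and let a : ℝ → (real symmetric d×d matrices) be measurable with Λ⁻¹|e|² ≤ e·a(t)e ≤ Λ|e|² for all t and e. Then for every t > 0 the matrix P(t) is invertible, and there are constants c, C > 0 depending only on d and Λ such that for all t > 0 and all w ∈ ℝ^d: (i) c·t³|w|² ≤ w·P(t)w ≤ C·t³|w|²; (ii) c·t^{i+1}|w| ≤ |A_i(t)w| ≤ C·t^{i+1}|w| for i = 0, 1, 2; (iii) |M(t)w| ≤ C·t|w|. -/

import Mathlib

noncomputable section

open Real MeasureTheory Matrix Set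
open scoped ENNReal

/-- Euclidean norm on `Fin d → ℝ`. -/
def eunorm {d : ℕ} (x : Fin d → ℝ) : ℝ := Real.sqrt (∑ i, (x i) ^ 2)

/-- The moment matrices `A_i(t) = ∫₀ᵗ sⁱ a(s) ds`. -/
def Amat {d : ℕ} (a : ℝ → Matrix (Fin d) (Fin d) ℝ) (i : ℕ) (t : ℝ) :
    Matrix (Fin d) (Fin d) ℝ :=
  Matrix.of fun j k => ∫ s in Set.Ioc (0:ℝ) t, s ^ i * a s j k

/-- `P(t) = A₂(t) − A₁(t)A₀(t)⁻¹A₁(t)`. -/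
def Pmat {d : ℕ} (a : ℝ → Matrix (Fin d) (Fin d) ℝ) (t : ℝ) : Matrix (Fin d) (Fin d) ℝ :=
  Amat a 2 t - Amat a 1 t * (Amat a 0 t)⁻¹ * Amat a 1 t

/-- `M(t) = t·Id − A₀(t)⁻¹A₁(t)`. -/
def Mmat {d : ℕ} (a : ℝ → Matrix (Fin d) (Fin d) ℝ) (t : ℝ) : Matrix (Fin d) (Fin d) ℝ :=
  t • (1 : Matrix (Fin d) (Fin d) ℝ) - (Amat a 0 t)⁻¹ * Amat a 1 t

/-- The fundamental solution `Γ_a` of the `(x,v)`-homogeneous kinetic Fokker-Planck equation. -/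
def Gam {d : ℕ} (a : ℝ → Matrix (Fin d) (Fin d) ℝ)
    (z : ℝ × (Fin d → ℝ) × (Fin d → ℝ)) : ℝ :=
  if 0 < z.1 then
    (4 * π) ^ (-(d:ℝ)) * (Real.sqrt ((Amat a 0 z.1 * Pmat a z.1).det))⁻¹ *
      Real.exp (-(z.2.2 ⬝ᵥ ((Amat a 0 z.1)⁻¹).mulVec z.2.2) / 4 -
        ((z.2.1 - (Mmat a z.1).mulVec z.2.2) ⬝ᵥ
          ((Pmat a z.1)⁻¹).mulVec (z.2.1 - (Mmat a z.1).mulVec z.2.2)) / 4)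
  else 0

/-- `a` is measurable (entrywise). -/
def MeasCoeff {d : ℕ} (a : ℝ → Matrix (Fin d) (Fin d) ℝ) : Prop :=
  ∀ j k, Measurable fun t => a t j k

/-- `a(t)` is symmetric and uniformly elliptic: `Λ⁻¹|e|² ≤ e·a(t)e ≤ Λ|e|²`. -/
def Elliptic {d : ℕ} (Λ : ℝ) (a : ℝ → Matrix (Fin d) (Fin d) ℝ) : Prop :=
  ∀ t : ℝ, (a t).IsSymm ∧ ∀ e : Fin d → ℝ,
    Λ⁻¹ * (e ⬝ᵥ e) ≤ e ⬝ᵥ (a t).mulVec e ∧ e ⬝ᵥ (a t).mulVec e ≤ Λ * (e ⬝ᵥ e)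

/-
Each `A_i(t)` averages `a` against the weight `sⁱ` on `(0, t]`, so ellipticity makes the quadratic
form of `A_i(t)` comparable to `t^{i+1}/(i+1)`; since the `A_i(t)` are symmetric, this controls
`|A_i(t)w|` from both sides and `|A₀(t)⁻¹v|` from above, which gives (ii) and (iii).
`P(t)` is the Schur complement of `A₀(t)` in the block matrix of the form
`(x, w) ↦ ∫₀ᵗ (x + sw)·a(s)(x + sw) ds`, so `w·P(t)w` is the value of this form at
`x = -A₀(t)⁻¹A₁(t)w`. Ellipticity bounds it below by `Λ⁻¹∫₀ᵗ |x + sw|² ds ≥ t³|w|²/(12Λ)`, and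
above by `w·A₂(t)w ≤ Λt³|w|²/3`.
-/

section EuclideanNorm

variable {d : ℕ}

theorem eunorm_eq_norm (x : Fin d → ℝ) :
    eunorm x = ‖(WithLp.toLp 2 x : EuclideanSpace ℝ (Fin d))‖ := by
  simp [eunorm, EuclideanSpace.norm_eq]

theorem dotProduct_eq_inner (x y : Fin d → ℝ) :
    x ⬝ᵥ y = inner ℝ (WithLp.toLp 2 x : EuclideanSpace ℝ (Fin d)) (WithLp.toLp 2 y) := by
  simp [EuclideanSpace.inner_eq_star_dotProduct, dotProduct_comm]

theorem eunorm_nonneg (x : Fin d → ℝ) : 0 ≤ eunorm x := Real.sqrt_nonneg _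

theorem eunorm_sq (x : Fin d → ℝ) : eunorm x ^ 2 = x ⬝ᵥ x := by
  rw [eunorm_eq_norm, dotProduct_eq_inner, real_inner_self_eq_norm_sq]

theorem abs_dotProduct_le (x y : Fin d → ℝ) : |x ⬝ᵥ y| ≤ eunorm x * eunorm y := by
  rw [dotProduct_eq_inner, eunorm_eq_norm, eunorm_eq_norm]
  exact abs_real_inner_le_norm _ _

theorem eunorm_sub_le (x y : Fin d → ℝ) : eunorm (x - y) ≤ eunorm x + eunorm y := by
  simpa only [eunorm_eq_norm, WithLp.toLp_sub] using norm_sub_le _ _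

theorem eunorm_smul (c : ℝ) (x : Fin d → ℝ) : eunorm (c • x) = |c| * eunorm x := by
  simp only [eunorm_eq_norm, WithLp.toLp_smul, norm_smul, Real.norm_eq_abs]

theorem dotProduct_self_nonneg (x : Fin d → ℝ) : 0 ≤ x ⬝ᵥ x := by
  rw [← eunorm_sq]
  positivity

theorem eunorm_single_one (j : Fin d) : eunorm (Pi.single j (1 : ℝ)) = 1 := by
  simp [eunorm_eq_norm]

end EuclideanNorm

namespace Matrix

variable {d : ℕ} {A : Matrix (Fin d) (Fin d) ℝ}

theorem dotProduct_mulVec_eq_sum (A : Matrix (Fin d) (Fin d) ℝ) (x y : Fin d → ℝ) :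
    x ⬝ᵥ A *ᵥ y = ∑ j, ∑ k, x j * A j k * y k := by
  simp only [dotProduct, mulVec, Finset.mul_sum, mul_assoc]

theorem IsSymm.dotProduct_mulVec_comm (hA : A.IsSymm) (u v : Fin d → ℝ) :
    u ⬝ᵥ A *ᵥ v = v ⬝ᵥ A *ᵥ u := by
  simpa only [hA.eq] using dotProduct_transpose_mulVec A u v

theorem IsSymm.sq_dotProduct_mulVec_le (hA : A.IsSymm) (hA₀ : ∀ z, 0 ≤ z ⬝ᵥ A *ᵥ z)
    (x y : Fin d → ℝ) : (x ⬝ᵥ A *ᵥ y) ^ 2 ≤ (x ⬝ᵥ A *ᵥ x) * (y ⬝ᵥ A *ᵥ y) := by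
  have hquad : ∀ r : ℝ,
      0 ≤ (y ⬝ᵥ A *ᵥ y) * (r * r) + 2 * (x ⬝ᵥ A *ᵥ y) * r + x ⬝ᵥ A *ᵥ x := fun r => by
    have := hA₀ (x + r • y)
    simp only [mulVec_add, mulVec_smul, dotProduct_add, add_dotProduct, smul_dotProduct,
      dotProduct_smul, smul_eq_mul, IsSymm.dotProduct_mulVec_comm hA y x] at this
    linarith
  have := discrim_le_zero hquad
  rw [discrim] at this
  linarith

theorem mul_eunorm_le_eunorm_mulVec {α : ℝ} (hA : ∀ z, α * (z ⬝ᵥ z) ≤ z ⬝ᵥ A *ᵥ z)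
    (w : Fin d → ℝ) : α * eunorm w ≤ eunorm (A *ᵥ w) := by
  rcases (eunorm_nonneg w).eq_or_lt with hw | hw
  · rw [← hw, mul_zero]
    exact eunorm_nonneg _
  have : α * eunorm w ^ 2 ≤ eunorm w * eunorm (A *ᵥ w) := by
    rw [eunorm_sq]
    exact (hA w).trans ((le_abs_self _).trans (abs_dotProduct_le w _))
  nlinarith

theorem IsSymm.eunorm_mulVec_le (hA : A.IsSymm) (hA₀ : ∀ z, 0 ≤ z ⬝ᵥ A *ᵥ z) {β : ℝ}
    (hβ : 0 ≤ β) (hAβ : ∀ z, z ⬝ᵥ A *ᵥ z ≤ β * (z ⬝ᵥ z)) (w : Fin d → ℝ) :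
    eunorm (A *ᵥ w) ≤ β * eunorm w := by
  set u := A *ᵥ w
  rcases (eunorm_nonneg u).eq_or_lt with hu | hu
  · rw [← hu]
    exact mul_nonneg hβ (eunorm_nonneg w)
  have key : eunorm u ^ 2 * eunorm u ^ 2 ≤ eunorm u ^ 2 * (β * eunorm w) ^ 2 := by
    rw [mul_pow, eunorm_sq, eunorm_sq, ← sq]
    calc (u ⬝ᵥ u) ^ 2 ≤ (u ⬝ᵥ A *ᵥ u) * (w ⬝ᵥ A *ᵥ w) :=
          IsSymm.sq_dotProduct_mulVec_le hA hA₀ u w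
      _ ≤ (β * (u ⬝ᵥ u)) * (β * (w ⬝ᵥ w)) :=
        mul_le_mul (hAβ u) (hAβ w) (hA₀ w) ((hA₀ u).trans (hAβ u))
      _ = u ⬝ᵥ u * (β ^ 2 * (w ⬝ᵥ w)) := by ring
  exact (pow_le_pow_iff_left₀ hu.le (mul_nonneg hβ (eunorm_nonneg w)) two_ne_zero).mp
    (le_of_mul_le_mul_left key (by positivity))

theorem IsSymm.dotProduct_mulVec_add_smul (hA : A.IsSymm) (x w : Fin d → ℝ) (s : ℝ) :
    (x + s • w) ⬝ᵥ A *ᵥ (x + s • w)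
      = x ⬝ᵥ A *ᵥ x + 2 * s * (x ⬝ᵥ A *ᵥ w) + s ^ 2 * (w ⬝ᵥ A *ᵥ w) := by
  simp only [mulVec_add, mulVec_smul, dotProduct_add, add_dotProduct, smul_dotProduct,
    dotProduct_smul, smul_eq_mul, IsSymm.dotProduct_mulVec_comm hA w x]
  ring

theorem isUnit_det_of_coercive {α : ℝ} (hα : 0 < α) (hA : ∀ z, α * (z ⬝ᵥ z) ≤ z ⬝ᵥ A *ᵥ z) :
    IsUnit A.det := by
  rw [isUnit_iff_ne_zero, Ne, ← exists_mulVec_eq_zero_iff]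
  rintro ⟨v, hv, hAv⟩
  have hvv := hA v
  rw [hAv, dotProduct_zero] at hvv
  exact hv (dotProduct_self_eq_zero.mp
    (le_antisymm (nonpos_of_mul_nonpos_right hvv hα) (dotProduct_self_nonneg _)))

theorem eunorm_inv_mulVec_le {α : ℝ} (hα : 0 < α) (hA : ∀ z, α * (z ⬝ᵥ z) ≤ z ⬝ᵥ A *ᵥ z)
    (v : Fin d → ℝ) : eunorm (A⁻¹ *ᵥ v) ≤ α⁻¹ * eunorm v := by
  have h := mul_eunorm_le_eunorm_mulVec hA (A⁻¹ *ᵥ v)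
  rw [mulVec_mulVec, mul_nonsing_inv A (isUnit_det_of_coercive hα hA), one_mulVec] at h
  rwa [le_inv_mul_iff₀ hα]

end Matrix

section PolynomialIntegrals

variable {d : ℕ} {t : ℝ}

theorem setIntegral_Ioc_pow_mul (ht : 0 ≤ t) (i : ℕ) (K : ℝ) :
    ∫ s in Ioc 0 t, s ^ i * K = K / (i + 1) * t ^ (i + 1) := by
  rw [integral_mul_const, ← intervalIntegral.integral_of_le ht, integral_pow]
  ring

theorem integral_dotProduct_add_smul (ht : 0 ≤ t) (x w : Fin d → ℝ) :
    ∫ s in Ioc 0 t, (x + s • w) ⬝ᵥ (x + s • w)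
      = t * (x ⬝ᵥ x) + t ^ 2 * (x ⬝ᵥ w) + t ^ 3 / 3 * (w ⬝ᵥ w) := by
  have hint : ∀ (i : ℕ) (K : ℝ), IntegrableOn (fun s : ℝ => s ^ i * K) (Ioc 0 t) :=
    fun i K => (by fun_prop : Continuous _).integrableOn_Ioc
  calc ∫ s in Ioc 0 t, (x + s • w) ⬝ᵥ (x + s • w)
      = ∫ s in Ioc 0 t, (s ^ 0 * (x ⬝ᵥ x) + s ^ 1 * (2 * (x ⬝ᵥ w)) + s ^ 2 * (w ⬝ᵥ w)) := by
        congr with s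
        simpa only [one_mulVec, pow_zero, pow_one, one_mul, mul_assoc, mul_left_comm] using
          IsSymm.dotProduct_mulVec_add_smul isSymm_one x w s
    _ = t * (x ⬝ᵥ x) + t ^ 2 * (x ⬝ᵥ w) + t ^ 3 / 3 * (w ⬝ᵥ w) := by
        rw [integral_add _ (hint 2 _), integral_add (hint 0 _) (hint 1 _)]
        · simp only [setIntegral_Ioc_pow_mul ht]
          ring
        · exact (hint 0 _).add (hint 1 _)

end PolynomialIntegrals

section MomentMatrices

variable {d : ℕ} {Λ : ℝ} {a : ℝ → Matrix (Fin d) (Fin d) ℝ} {t : ℝ}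

theorem Elliptic.dotProduct_mulVec_nonneg (hΛ : 0 < Λ) (ha : Elliptic Λ a) (s : ℝ)
    (z : Fin d → ℝ) : 0 ≤ z ⬝ᵥ a s *ᵥ z :=
  (mul_nonneg (inv_nonneg.mpr hΛ.le) (dotProduct_self_nonneg _)).trans ((ha s).2 z).1

theorem Elliptic.abs_apply_le (hΛ : 0 < Λ) (ha : Elliptic Λ a) (s : ℝ) (j k : Fin d) :
    |a s j k| ≤ Λ := by
  have hjk : a s j k = Pi.single j 1 ⬝ᵥ a s *ᵥ Pi.single k 1 := by simp
  have hk := IsSymm.eunorm_mulVec_le (ha s).1 (Elliptic.dotProduct_mulVec_nonneg hΛ ha s) hΛ.le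
    (fun z => ((ha s).2 z).2) (Pi.single k 1)
  rw [eunorm_single_one, mul_one] at hk
  calc |a s j k| ≤ eunorm (Pi.single j 1) * eunorm (a s *ᵥ Pi.single k 1) :=
        hjk ▸ abs_dotProduct_le _ _
    _ ≤ Λ := by rwa [eunorm_single_one, one_mul]

theorem Elliptic.integrableOn_pow_mul_apply (hΛ : 0 < Λ) (hm : MeasCoeff a) (ha : Elliptic Λ a)
    (i : ℕ) (j k : Fin d) : IntegrableOn (fun s => s ^ i * a s j k) (Ioc 0 t) := by
  refine Measure.integrableOn_of_bounded (M := t ^ i * Λ) measure_Ioc_lt_top.ne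
    ((measurable_id.pow_const i).mul (hm j k)).aestronglyMeasurable ?_
  filter_upwards [ae_restrict_mem measurableSet_Ioc] with s hs
  rw [Real.norm_eq_abs, abs_mul, abs_pow, abs_of_pos hs.1]
  exact mul_le_mul (pow_le_pow_left₀ hs.1.le hs.2 i) (Elliptic.abs_apply_le hΛ ha s j k)
    (abs_nonneg _) (pow_nonneg (hs.1.le.trans hs.2) i)

theorem Elliptic.integrableOn_pow_mul_dotProduct_mulVec (hΛ : 0 < Λ) (hm : MeasCoeff a)
    (ha : Elliptic Λ a) (i : ℕ) (x y : Fin d → ℝ) :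
    IntegrableOn (fun s => s ^ i * (x ⬝ᵥ a s *ᵥ y)) (Ioc 0 t) := by
  simp only [dotProduct_mulVec_eq_sum, Finset.mul_sum]
  refine integrable_finsetSum _ fun j _ => integrable_finsetSum _ fun k _ => ?_
  simpa only [mul_comm, mul_left_comm, mul_assoc] using
    (Elliptic.integrableOn_pow_mul_apply hΛ hm ha i j k).const_mul (x j * y k)

theorem Elliptic.dotProduct_Amat_mulVec (hΛ : 0 < Λ) (hm : MeasCoeff a) (ha : Elliptic Λ a)
    (i : ℕ) (x y : Fin d → ℝ) :
    x ⬝ᵥ Amat a i t *ᵥ y = ∫ s in Ioc 0 t, s ^ i * (x ⬝ᵥ a s *ᵥ y) := by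
  have hint : ∀ j k, IntegrableOn (fun s => x j * (s ^ i * a s j k) * y k) (Ioc 0 t) :=
    fun j k => ((Elliptic.integrableOn_pow_mul_apply hΛ hm ha i j k).const_mul _).mul_const _
  have hpt : ∀ s, s ^ i * (x ⬝ᵥ a s *ᵥ y) = ∑ j, ∑ k, x j * (s ^ i * a s j k) * y k := by
    intro s
    simp only [dotProduct_mulVec_eq_sum, Finset.mul_sum]
    ring_nf
  simp only [hpt]
  simp only [dotProduct_mulVec_eq_sum, Amat, of_apply]
  rw [integral_finsetSum _ fun j _ => integrable_finsetSum _ fun k _ => hint j k]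
  refine Finset.sum_congr rfl fun j _ => ?_
  rw [integral_finsetSum _ fun k _ => hint j k]
  simp only [integral_mul_const, integral_const_mul]

theorem Elliptic.Amat_isSymm (ha : Elliptic Λ a) (i : ℕ) (t : ℝ) : (Amat a i t).IsSymm :=
  IsSymm.ext fun j k => by simp only [Amat, of_apply, ((ha _).1.apply j k)]

theorem Elliptic.le_dotProduct_Amat_mulVec (hΛ : 0 < Λ) (hm : MeasCoeff a) (ha : Elliptic Λ a)
    (ht : 0 ≤ t) (i : ℕ) (x : Fin d → ℝ) :
    Λ⁻¹ / (i + 1) * t ^ (i + 1) * (x ⬝ᵥ x) ≤ x ⬝ᵥ Amat a i t *ᵥ x := by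
  calc Λ⁻¹ / (i + 1) * t ^ (i + 1) * (x ⬝ᵥ x) = ∫ s in Ioc 0 t, s ^ i * (Λ⁻¹ * (x ⬝ᵥ x)) := by
        rw [setIntegral_Ioc_pow_mul ht]; ring
    _ ≤ ∫ s in Ioc 0 t, s ^ i * (x ⬝ᵥ a s *ᵥ x) :=
        setIntegral_mono_on (by fun_prop : Continuous _).integrableOn_Ioc
          (Elliptic.integrableOn_pow_mul_dotProduct_mulVec hΛ hm ha i x x) measurableSet_Ioc
          fun s hs => mul_le_mul_of_nonneg_left ((ha s).2 x).1 (pow_nonneg hs.1.le i)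
    _ = x ⬝ᵥ Amat a i t *ᵥ x := (Elliptic.dotProduct_Amat_mulVec hΛ hm ha i x x).symm

theorem Elliptic.dotProduct_Amat_mulVec_le (hΛ : 0 < Λ) (hm : MeasCoeff a) (ha : Elliptic Λ a)
    (ht : 0 ≤ t) (i : ℕ) (x : Fin d → ℝ) :
    x ⬝ᵥ Amat a i t *ᵥ x ≤ Λ / (i + 1) * t ^ (i + 1) * (x ⬝ᵥ x) := by
  calc x ⬝ᵥ Amat a i t *ᵥ x = ∫ s in Ioc 0 t, s ^ i * (x ⬝ᵥ a s *ᵥ x) :=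
        Elliptic.dotProduct_Amat_mulVec hΛ hm ha i x x
    _ ≤ ∫ s in Ioc 0 t, s ^ i * (Λ * (x ⬝ᵥ x)) :=
        setIntegral_mono_on (Elliptic.integrableOn_pow_mul_dotProduct_mulVec hΛ hm ha i x x)
          (by fun_prop : Continuous _).integrableOn_Ioc measurableSet_Ioc
          fun s hs => mul_le_mul_of_nonneg_left ((ha s).2 x).2 (pow_nonneg hs.1.le i)
    _ = Λ / (i + 1) * t ^ (i + 1) * (x ⬝ᵥ x) := by
        rw [setIntegral_Ioc_pow_mul ht]; ring

theorem Elliptic.le_eunorm_Amat_mulVec (hΛ : 0 < Λ) (hm : MeasCoeff a) (ha : Elliptic Λ a)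
    (ht : 0 ≤ t) (i : ℕ) (w : Fin d → ℝ) :
    Λ⁻¹ / (i + 1) * t ^ (i + 1) * eunorm w ≤ eunorm (Amat a i t *ᵥ w) :=
  mul_eunorm_le_eunorm_mulVec (Elliptic.le_dotProduct_Amat_mulVec hΛ hm ha ht i) w

theorem Elliptic.eunorm_Amat_mulVec_le (hΛ : 0 < Λ) (hm : MeasCoeff a) (ha : Elliptic Λ a)
    (ht : 0 ≤ t) (i : ℕ) (w : Fin d → ℝ) :
    eunorm (Amat a i t *ᵥ w) ≤ Λ / (i + 1) * t ^ (i + 1) * eunorm w :=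
  IsSymm.eunorm_mulVec_le (Elliptic.Amat_isSymm ha i t)
    (fun z => (mul_nonneg (by positivity) (dotProduct_self_nonneg _)).trans
      (Elliptic.le_dotProduct_Amat_mulVec hΛ hm ha ht i z))
    (by positivity) (Elliptic.dotProduct_Amat_mulVec_le hΛ hm ha ht i) w

theorem Elliptic.integrableOn_dotProduct_mulVec_add_smul (hΛ : 0 < Λ) (hm : MeasCoeff a)
    (ha : Elliptic Λ a) (x w : Fin d → ℝ) :
    IntegrableOn (fun s => (x + s • w) ⬝ᵥ a s *ᵥ (x + s • w)) (Ioc 0 t) := by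
  have hint := Elliptic.integrableOn_pow_mul_dotProduct_mulVec hΛ hm ha (t := t)
  refine (((hint 0 x x).add ((hint 1 x w).const_mul 2)).add (hint 2 w w)).congr_fun
    (fun s _ => ?_) measurableSet_Ioc
  simp only [Pi.add_apply, IsSymm.dotProduct_mulVec_add_smul (ha s).1]
  ring

theorem Elliptic.integral_dotProduct_mulVec_add_smul (hΛ : 0 < Λ) (hm : MeasCoeff a)
    (ha : Elliptic Λ a) (x w : Fin d → ℝ) :
    ∫ s in Ioc 0 t, (x + s • w) ⬝ᵥ a s *ᵥ (x + s • w)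
      = x ⬝ᵥ Amat a 0 t *ᵥ x + 2 * (x ⬝ᵥ Amat a 1 t *ᵥ w) + w ⬝ᵥ Amat a 2 t *ᵥ w := by
  have hint := Elliptic.integrableOn_pow_mul_dotProduct_mulVec hΛ hm ha (t := t)
  simp only [Elliptic.dotProduct_Amat_mulVec hΛ hm ha]
  rw [← integral_const_mul, ← integral_add (hint 0 x x) ((hint 1 x w).const_mul 2),
    ← integral_add _ (hint 2 w w)]
  · congr with s
    rw [IsSymm.dotProduct_mulVec_add_smul (ha s).1]
    ring
  · exact (hint 0 x x).add ((hint 1 x w).const_mul 2)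

end MomentMatrices

section SchurComplement

variable {d : ℕ} {Λ : ℝ} {a : ℝ → Matrix (Fin d) (Fin d) ℝ} {t : ℝ}

theorem Elliptic.Amat_zero_mulVec_inv_mulVec (hΛ : 0 < Λ) (hm : MeasCoeff a) (ha : Elliptic Λ a)
    (ht : 0 < t) (v : Fin d → ℝ) : Amat a 0 t *ᵥ ((Amat a 0 t)⁻¹ *ᵥ v) = v := by
  rw [mulVec_mulVec, mul_nonsing_inv _ (isUnit_det_of_coercive (by positivity)
    (Elliptic.le_dotProduct_Amat_mulVec hΛ hm ha ht.le 0)), one_mulVec]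

theorem Elliptic.dotProduct_Pmat_mulVec (ha : Elliptic Λ a) (t : ℝ) (w : Fin d → ℝ) :
    w ⬝ᵥ Pmat a t *ᵥ w
      = w ⬝ᵥ Amat a 2 t *ᵥ w - (Amat a 0 t)⁻¹ *ᵥ Amat a 1 t *ᵥ w ⬝ᵥ Amat a 1 t *ᵥ w := by
  rw [Pmat, sub_mulVec, dotProduct_sub, ← mulVec_mulVec, ← mulVec_mulVec,
    IsSymm.dotProduct_mulVec_comm (Elliptic.Amat_isSymm ha 1 t)]

theorem Elliptic.dotProduct_Pmat_mulVec_eq_integral (hΛ : 0 < Λ) (hm : MeasCoeff a)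
    (ha : Elliptic Λ a) (ht : 0 < t) (w : Fin d → ℝ) :
    w ⬝ᵥ Pmat a t *ᵥ w = ∫ s in Ioc 0 t,
      (-((Amat a 0 t)⁻¹ *ᵥ Amat a 1 t *ᵥ w) + s • w) ⬝ᵥ
        a s *ᵥ (-((Amat a 0 t)⁻¹ *ᵥ Amat a 1 t *ᵥ w) + s • w) := by
  rw [Elliptic.integral_dotProduct_mulVec_add_smul hΛ hm ha, Elliptic.dotProduct_Pmat_mulVec ha]
  simp only [mulVec_neg, neg_dotProduct, dotProduct_neg, neg_neg,
    Elliptic.Amat_zero_mulVec_inv_mulVec hΛ hm ha ht]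
  ring

theorem Elliptic.le_dotProduct_Pmat_mulVec (hΛ : 0 < Λ) (hm : MeasCoeff a) (ha : Elliptic Λ a)
    (ht : 0 < t) (w : Fin d → ℝ) : Λ⁻¹ / 12 * t ^ 3 * (w ⬝ᵥ w) ≤ w ⬝ᵥ Pmat a t *ᵥ w := by
  rw [Elliptic.dotProduct_Pmat_mulVec_eq_integral hΛ hm ha ht]
  set x := -((Amat a 0 t)⁻¹ *ᵥ Amat a 1 t *ᵥ w)
  -- `∫₀ᵗ |x + sw|² ds = t |x + (t/2) w|² + t³|w|²/12`
  have hsq : 0 ≤ t * ((x + (t / 2) • w) ⬝ᵥ (x + (t / 2) • w)) := by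
    rw [← eunorm_sq]; positivity
  simp only [add_dotProduct, dotProduct_add, smul_dotProduct, dotProduct_smul, smul_eq_mul,
    dotProduct_comm w x] at hsq
  calc Λ⁻¹ / 12 * t ^ 3 * (w ⬝ᵥ w) ≤ ∫ s in Ioc 0 t, Λ⁻¹ * ((x + s • w) ⬝ᵥ (x + s • w)) := by
        rw [integral_const_mul, integral_dotProduct_add_smul ht.le]
        nlinarith [mul_nonneg (inv_nonneg.2 hΛ.le) hsq]
    _ ≤ ∫ s in Ioc 0 t, (x + s • w) ⬝ᵥ a s *ᵥ (x + s • w) :=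
        setIntegral_mono_on (by fun_prop : Continuous _).integrableOn_Ioc
          (Elliptic.integrableOn_dotProduct_mulVec_add_smul hΛ hm ha x w) measurableSet_Ioc
          fun s _ => ((ha s).2 _).1

theorem Elliptic.dotProduct_Pmat_mulVec_le (hΛ : 0 < Λ) (hm : MeasCoeff a) (ha : Elliptic Λ a)
    (ht : 0 < t) (w : Fin d → ℝ) : w ⬝ᵥ Pmat a t *ᵥ w ≤ Λ / 3 * t ^ 3 * (w ⬝ᵥ w) := by
  set u := (Amat a 0 t)⁻¹ *ᵥ Amat a 1 t *ᵥ w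
  have hu : 0 ≤ u ⬝ᵥ Amat a 1 t *ᵥ w := by
    rw [← Elliptic.Amat_zero_mulVec_inv_mulVec hΛ hm ha ht (Amat a 1 t *ᵥ w)]
    exact (mul_nonneg (by positivity) (dotProduct_self_nonneg _)).trans
      (Elliptic.le_dotProduct_Amat_mulVec hΛ hm ha ht.le 0 u)
  have h2 := Elliptic.dotProduct_Amat_mulVec_le hΛ hm ha ht.le 2 w
  norm_num at h2
  rw [Elliptic.dotProduct_Pmat_mulVec ha]
  linarith

theorem Elliptic.eunorm_Mmat_mulVec_le (hΛ : 0 < Λ) (hm : MeasCoeff a) (ha : Elliptic Λ a)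
    (ht : 0 < t) (w : Fin d → ℝ) : eunorm (Mmat a t *ᵥ w) ≤ (1 + Λ ^ 2 / 2) * t * eunorm w := by
  have hinv := eunorm_inv_mulVec_le (by positivity)
    (Elliptic.le_dotProduct_Amat_mulVec hΛ hm ha ht.le 0) (Amat a 1 t *ᵥ w)
  have hA₁ := Elliptic.eunorm_Amat_mulVec_le hΛ hm ha ht.le 1 w
  simp only [Nat.cast_zero, zero_add, div_one, pow_one] at hinv
  norm_num at hA₁
  rw [Mmat, sub_mulVec, smul_mulVec, one_mulVec, ← mulVec_mulVec]
  calc eunorm (t • w - (Amat a 0 t)⁻¹ *ᵥ Amat a 1 t *ᵥ w)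
      ≤ t * eunorm w + (Λ⁻¹ * t)⁻¹ * (Λ / 2 * t ^ 2 * eunorm w) := by
        grw [eunorm_sub_le, eunorm_smul, abs_of_pos ht, hinv, hA₁]
    _ = (1 + Λ ^ 2 / 2) * t * eunorm w := by field_simp

end SchurComplement

theorem matrix_scaling_bounds_general (d : ℕ) (Λ : ℝ) (hΛ : 1 ≤ Λ) :
    ∃ c C : ℝ, 0 < c ∧ 0 < C ∧
      ∀ (a : ℝ → Matrix (Fin d) (Fin d) ℝ), MeasCoeff a → Elliptic Λ a →
      ∀ t : ℝ, 0 < t →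
        -- `P(t)` is invertible
        IsUnit (Pmat a t).det ∧
        ∀ w : Fin d → ℝ,
          -- (i)  `c t³|w|² ≤ w·P(t)w ≤ C t³|w|²`
          (c * t ^ 3 * (eunorm w) ^ 2 ≤ w ⬝ᵥ (Pmat a t).mulVec w ∧
            w ⬝ᵥ (Pmat a t).mulVec w ≤ C * t ^ 3 * (eunorm w) ^ 2) ∧
          -- (ii) `c t^{i+1}|w| ≤ |A_i(t)w| ≤ C t^{i+1}|w|` for `i = 0,1,2`
          (∀ i : ℕ, i ≤ 2 →
            c * t ^ (i + 1) * eunorm w ≤ eunorm ((Amat a i t).mulVec w) ∧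
            eunorm ((Amat a i t).mulVec w) ≤ C * t ^ (i + 1) * eunorm w) ∧
          -- (iii) `|M(t)w| ≤ C t |w|`
          eunorm ((Mmat a t).mulVec w) ≤ C * t * eunorm w := by
  have hΛ₀ : 0 < Λ := by linarith
  have hΛC : Λ ≤ Λ ^ 2 + 1 := by nlinarith
  refine ⟨Λ⁻¹ / 12, Λ ^ 2 + 1, by positivity, by positivity, fun a hm ha t ht => ?_⟩
  refine ⟨isUnit_det_of_coercive (by positivity)
    (Elliptic.le_dotProduct_Pmat_mulVec hΛ₀ hm ha ht), fun w => ⟨⟨?_, ?_⟩, fun i hi => ⟨?_, ?_⟩, ?_⟩⟩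
  · rw [eunorm_sq]
    exact Elliptic.le_dotProduct_Pmat_mulVec hΛ₀ hm ha ht w
  · rw [eunorm_sq]
    grw [Elliptic.dotProduct_Pmat_mulVec_le hΛ₀ hm ha ht w, div_le_self hΛ₀.le (by norm_num), hΛC]
    all_goals exact dotProduct_self_nonneg w
  · grw [← Elliptic.le_eunorm_Amat_mulVec hΛ₀ hm ha ht.le i w]
    gcongr
    · exact eunorm_nonneg w
    · exact_mod_cast (by omega : i + 1 ≤ 12)
  · grw [Elliptic.eunorm_Amat_mulVec_le hΛ₀ hm ha ht.le i w,
      div_le_self hΛ₀.le (by norm_cast; omega), hΛC]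
    all_goals exact eunorm_nonneg w
  · grw [Elliptic.eunorm_Mmat_mulVec_le hΛ₀ hm ha ht w,
      (by linarith [sq_nonneg Λ] : 1 + Λ ^ 2 / 2 ≤ Λ ^ 2 + 1)]
    all_goals exact eunorm_nonneg w

/-- **Quantitative bounds on the matrices `P(t)`, `A_i(t)`, `M(t)`** (Lemma 2.4).
The constants `c`, `C` depend only on `d` and `Λ`. -/
theorem matrix_scaling_bounds (d : ℕ) (hd : 1 ≤ d) (Λ : ℝ) (hΛ : 1 ≤ Λ) :
    ∃ c C : ℝ, 0 < c ∧ 0 < C ∧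
      ∀ (a : ℝ → Matrix (Fin d) (Fin d) ℝ), MeasCoeff a → Elliptic Λ a →
      ∀ t : ℝ, 0 < t →
        -- `P(t)` is invertible
        IsUnit (Pmat a t).det ∧
        ∀ w : Fin d → ℝ,
          -- (i)  `c t³|w|² ≤ w·P(t)w ≤ C t³|w|²`
          (c * t ^ 3 * (eunorm w) ^ 2 ≤ w ⬝ᵥ (Pmat a t).mulVec w ∧
            w ⬝ᵥ (Pmat a t).mulVec w ≤ C * t ^ 3 * (eunorm w) ^ 2) ∧
          -- (ii) `c t^{i+1}|w| ≤ |A_i(t)w| ≤ C t^{i+1}|w|` for `i = 0,1,2`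
          (∀ i : ℕ, i ≤ 2 →
            c * t ^ (i + 1) * eunorm w ≤ eunorm ((Amat a i t).mulVec w) ∧
            eunorm ((Amat a i t).mulVec w) ≤ C * t ^ (i + 1) * eunorm w) ∧
          -- (iii) `|M(t)w| ≤ C t |w|`
          eunorm ((Mmat a t).mulVec w) ≤ C * t * eunorm w :=
  matrix_scaling_bounds_general d Λ hΛ
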